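/- Small-r two-sided asymptotics for Φ: there exist constants c > 0 and C > 0 such that for all r ∈ (0, 1/2] and all v ≥ 0 with r v ≤ 1, c (v + v²) ≤ ∫₀^v Ã(r,y)^{1/2} dy ≤ C (v + v²). -/

import Mathlib

open Real Set

/-- `Ã(r,y) = 1 + 2 sin²(ry) / r²`. -/
noncomputable def Atil (r y : ℝ) : ℝ := 1 + 2 * Real.sin (r * y) ^ 2 / r ^ 2

/-! Since `|sin x| ≤ |x|` and, by Jordan's inequality, `sin x ≥ 2x/π` on `[0, π/2]`, the
integrand `Ã(r,y)^{1/2}` is squeezed between `(1 + y)/2` and `1 + 2y` as long as `ry ≤ 1`;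
integrating these two linear bounds over `[0, v]` gives both sides with `c = 1/4`, `C = 1`. -/

lemma continuous_Atil (r : ℝ) : Continuous (Atil r) := by
  unfold Atil; fun_prop

lemma Atil_le_one_add_two_mul_sq (r y : ℝ) : Atil r y ≤ 1 + 2 * y ^ 2 := by
  have hsin : Real.sin (r * y) ^ 2 ≤ y ^ 2 * r ^ 2 := by
    rw [← mul_pow, mul_comm y]
    exact sq_le_sq.mpr Real.abs_sin_le_abs
  have : Real.sin (r * y) ^ 2 / r ^ 2 ≤ y ^ 2 :=
    div_le_of_le_mul₀ (sq_nonneg r) (sq_nonneg y) hsin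
  unfold Atil
  rw [mul_div_assoc]
  linarith

lemma one_add_sq_div_two_le_Atil {r y : ℝ} (hr : 0 < r) (hy : 0 ≤ y) (hry : r * y ≤ π / 2) :
    1 + y ^ 2 / 2 ≤ Atil r y := by
  have hjordan : 2 / π * (r * y) ≤ Real.sin (r * y) := Real.mul_le_sin (by positivity) hry
  have hsq : (2 / π) ^ 2 * y ^ 2 * r ^ 2 ≤ Real.sin (r * y) ^ 2 := by
    calc (2 / π) ^ 2 * y ^ 2 * r ^ 2 = (2 / π * (r * y)) ^ 2 := by ring
      _ ≤ Real.sin (r * y) ^ 2 := pow_le_pow_left₀ (by positivity) hjordan 2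
  have hπ : (1 / 2 : ℝ) ≤ 2 * (2 / π) ^ 2 := by
    rw [div_pow, ← mul_div_assoc, le_div_iff₀ (by positivity)]
    nlinarith [pi_le_four, pi_pos]
  have : (2 / π) ^ 2 * y ^ 2 ≤ Real.sin (r * y) ^ 2 / r ^ 2 :=
    (le_div_iff₀ (by positivity)).mpr hsq
  unfold Atil
  rw [mul_div_assoc]
  nlinarith [sq_nonneg y]

lemma one_add_div_two_le_sqrt_Atil {r y : ℝ} (hr : 0 < r) (hy : 0 ≤ y) (hry : r * y ≤ π / 2) :
    (1 + y) / 2 ≤ √(Atil r y) := by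
  refine Real.le_sqrt_of_sq_le ?_
  nlinarith [one_add_sq_div_two_le_Atil hr hy hry, sq_nonneg (y - 1)]

lemma sqrt_Atil_le_one_add_two_mul (r : ℝ) {y : ℝ} (hy : 0 ≤ y) : √(Atil r y) ≤ 1 + 2 * y := by
  refine Real.sqrt_le_iff.mpr ⟨by positivity, ?_⟩
  nlinarith [Atil_le_one_add_two_mul_sq r y]

lemma integral_one_add_div_two (v : ℝ) : ∫ y in (0:ℝ)..v, (1 + y) / 2 = (v + v ^ 2 / 2) / 2 := by
  rw [intervalIntegral.integral_div, intervalIntegral.integral_add intervalIntegrable_const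
    intervalIntegral.intervalIntegrable_id]
  simp [integral_id]

lemma integral_one_add_two_mul (v : ℝ) : ∫ y in (0:ℝ)..v, (1 + 2 * y) = v + v ^ 2 := by
  rw [intervalIntegral.integral_add intervalIntegrable_const
    (intervalIntegral.intervalIntegrable_id.const_mul 2), intervalIntegral.integral_const_mul]
  simp only [intervalIntegral.integral_const, integral_id, smul_eq_mul]
  ring

/-- Small-`r` two-sided asymptotics for `Φ`. -/
theorem small_r_asymptotics_Phi :
    ∃ c : ℝ, 0 < c ∧ ∃ C : ℝ, 0 < C ∧
      ∀ r ∈ Set.Ioc (0:ℝ) (1/2), ∀ v : ℝ, 0 ≤ v → r * v ≤ 1 →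
        c * (v + v ^ 2) ≤ (∫ y in (0:ℝ)..v, (Atil r y) ^ ((1:ℝ)/2)) ∧
        (∫ y in (0:ℝ)..v, (Atil r y) ^ ((1:ℝ)/2)) ≤ C * (v + v ^ 2) := by
  refine ⟨1 / 4, by norm_num, 1, one_pos, ?_⟩
  rintro r ⟨hr, -⟩ v hv hrv
  have hlin {f : ℝ → ℝ} (hf : Continuous f) : IntervalIntegrable f MeasureTheory.volume 0 v :=
    hf.intervalIntegrable 0 v
  simp_rw [← Real.sqrt_eq_rpow]
  constructor
  · calc 1 / 4 * (v + v ^ 2) ≤ ∫ y in (0:ℝ)..v, (1 + y) / 2 := by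
          rw [integral_one_add_div_two]; nlinarith
      _ ≤ ∫ y in (0:ℝ)..v, √(Atil r y) :=
          intervalIntegral.integral_mono_on hv (hlin (by fun_prop)) (hlin (continuous_Atil r).sqrt)
            fun y ⟨hy, hyv⟩ => one_add_div_two_le_sqrt_Atil hr hy <|
              (mul_le_mul_of_nonneg_left hyv hr.le).trans (by linarith [pi_gt_three])
  · calc ∫ y in (0:ℝ)..v, √(Atil r y) ≤ ∫ y in (0:ℝ)..v, (1 + 2 * y) :=
          intervalIntegral.integral_mono_on hv (hlin (continuous_Atil r).sqrt) (hlin (by fun_prop))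
            fun y hy => sqrt_Atil_le_one_add_two_mul r hy.1
      _ = 1 * (v + v ^ 2) := by rw [integral_one_add_two_mul, one_mul]
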